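/- arXiv:1110.1417 — 5 statements merged into one kernel-verified Lean document; each statement's English description precedes it below -/
import Mathlib

section
/- Let n ≥ 2 and let λ_1 ≥ λ_2 ≥ ⋯ ≥ λ_n be real numbers satisfying ∑_{i=1}^n arctan λ_i ≥ (n−2)π/2. Then λ_1 + (n−1)λ_n ≥ 0. -/
open Real

/-
Write `a = λ_1`, `b = λ_n`, `k = n - 1`. Since the λ_i are sorted, the hypothesis gives
`k (π/2 - arctan a) ≤ π/2 + arctan b`. When `b < 0` both sides are arctangents of reciprocals,
`k arctan (1/a) ≤ arctan (-1/b)`, and subadditivity of arctan on `[0, ∞)` turns the left side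
into a bound from below by `arctan (k/a)`. Monotonicity then gives `k/a ≤ -1/b`, i.e. `a + k b ≥ 0`.
-/

namespace Real

theorem arctan_add_le_of_nonneg {x y : ℝ} (hx : 0 ≤ x) (hy : 0 ≤ y) :
    arctan (x + y) ≤ arctan x + arctan y := by
  rcases lt_or_ge (x * y) 1 with hxy | hxy
  · rw [arctan_add hxy, arctan_le_arctan_iff, le_div_iff₀ (by linarith)]
    nlinarith [mul_nonneg (mul_nonneg hx hy) (add_nonneg hx hy)]
  · have hy0 : 0 < y := lt_of_le_of_ne hy (by rintro rfl; simp at hxy; linarith)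
    have hinv : y⁻¹ ≤ x := by rwa [inv_le_iff_one_le_mul₀ hy0]
    -- `arctan x + arctan y ≥ arctan y⁻¹ + arctan y = π / 2`
    have := arctan_strictMono.monotone hinv
    rw [arctan_inv_of_pos hy0] at this
    linarith [arctan_lt_pi_div_two (x + y)]

theorem arctan_natCast_mul_le {x : ℝ} (hx : 0 ≤ x) (k : ℕ) :
    arctan (k * x) ≤ k * arctan x := by
  induction k with
  | zero => simp
  | succ k ih =>
    calc arctan ((k + 1 : ℕ) * x) = arctan (k * x + x) := by push_cast; ring_nf
      _ ≤ arctan (k * x) + arctan x := arctan_add_le_of_nonneg (by positivity) hx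
      _ ≤ (k + 1 : ℕ) * arctan x := by push_cast; linarith

theorem add_natCast_mul_nonneg_of_arctan {a b : ℝ} {k : ℕ} (hk : 1 ≤ k) (hba : b ≤ a)
    (h : ((k : ℝ) - 1) * π / 2 ≤ k * arctan a + arctan b) :
    0 ≤ a + k * b := by
  rcases le_or_gt 0 b with hb | hb
  · have := hb.trans hba
    positivity
  have hk' : (1 : ℝ) ≤ k := by exact_mod_cast hk
  have hgap : k * (π / 2 - arctan a) ≤ π / 2 + arctan b := by linarith
  have ha : 0 < a := by
    rw [← arctan_pos]
    nlinarith [arctan_lt_zero.mpr hb, arctan_lt_pi_div_two a]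
  have hnb : 0 < -b := neg_pos.mpr hb
  have hinv : arctan (k / a) ≤ arctan (1 / -b) :=
    calc arctan (k / a) = arctan (k * a⁻¹) := by rw [div_eq_mul_inv]
      _ ≤ k * arctan a⁻¹ := arctan_natCast_mul_le (inv_nonneg.mpr ha.le) k
      _ = k * (π / 2 - arctan a) := by rw [arctan_inv_of_pos ha]
      _ ≤ π / 2 + arctan b := hgap
      _ = arctan (1 / -b) := by rw [one_div, arctan_inv_of_pos hnb, arctan_neg]; ring
  rw [arctan_le_arctan_iff, div_le_div_iff₀ ha hnb] at hinv
  linarith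

end Real

theorem Finset.sum_le_card_sub_one_mul_add {ι : Type*} {s : Finset ι} {f : ι → ℝ} {i : ι}
    {M : ℝ} (hi : i ∈ s) (hM : ∀ j ∈ s, f j ≤ M) :
    ∑ j ∈ s, f j ≤ ((s.card : ℝ) - 1) * M + f i := by
  classical
  rw [← Finset.sum_erase_add s f hi]
  have := Finset.sum_le_card_nsmul (s.erase i) f M fun j hj ↦ hM j (Finset.mem_of_mem_erase hj)
  rw [Finset.card_erase_of_mem hi, nsmul_eq_mul, Nat.cast_sub (Finset.card_pos.mpr ⟨i, hi⟩)]
    at this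
  push_cast at this
  linarith

/-- For ordered reals `λ_1 ≥ ⋯ ≥ λ_n` with `∑ arctan λ_i ≥ (n-2)π/2`, `n ≥ 2`,
one has `λ_1 + (n-1) λ_n ≥ 0`.  (Indices are zero-based: `lam ⟨0⟩ = λ_1`,
`lam ⟨n-1⟩ = λ_n`.) -/
theorem ordered_eigen_max_min
    (n : ℕ) (hn : 2 ≤ n) (lam : Fin n → ℝ)
    (hsort : ∀ i j : Fin n, i ≤ j → lam j ≤ lam i)
    (hsum : ((n : ℝ) - 2) * Real.pi / 2 ≤ ∑ i, Real.arctan (lam i)) :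
    0 ≤ lam ⟨0, by omega⟩ + ((n : ℝ) - 1) * lam ⟨n - 1, by omega⟩ := by
  set first : Fin n := ⟨0, by omega⟩
  set last : Fin n := ⟨n - 1, by omega⟩
  have hbound : ∑ i, arctan (lam i) ≤ ((n : ℝ) - 1) * arctan (lam first) + arctan (lam last) := by
    simpa using Finset.sum_le_card_sub_one_mul_add (Finset.mem_univ last)
      fun j _ ↦ arctan_strictMono.monotone (hsort first j (Nat.zero_le _))
  obtain ⟨k, rfl⟩ : ∃ k, n = k + 1 := ⟨n - 1, by omega⟩
  have hk : ((k + 1 : ℕ) : ℝ) - 1 = k := by push_cast; ring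
  rw [hk] at hbound ⊢
  refine add_natCast_mul_nonneg_of_arctan (by omega) (hsort first last (Nat.zero_le _)) ?_
  push_cast at hsum
  linarith
end

section
/- Let λ_1,…,λ_n be real numbers and Θ a real number with ∑_{j=1}^n arctan λ_j = Θ. Then for each index i, (1/(1+λ_i²)) · ∏_{j=1}^n √(1+λ_j²) = cos Θ · ∑_{0≤2k≤n−1} (−1)^k σ_{2k}(λ̂_i) − sin Θ · ∑_{1≤2k−1≤n−1} (−1)^k σ_{2k−1}(λ̂_i), where σ_m(λ̂_i) denotes the m-th elementary symmetric polynomial of the n−1 numbers λ_1,…,λ_{i−1},λ_{i+1},…,λ_n (the conformality identity (1/(1+λ_1²),…,1/(1+λ_n²))·V = (∂Σ/∂λ_1,…,∂Σ/∂λ_n) with V = ∏_j √(1+λ_j²) and Σ = cos Θ ∑(−1)^k σ_{2k+1} − sin Θ ∑(−1)^k σ_{2k}). -/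
/-!
Since `1 + x I = √(1 + x²) e^{i arctan x}`, the hypothesis says `(1 + λ_i I) z = V e^{iΘ}`, where
`V = ∏_j √(1 + λ_j²)` and `z = ∏_{j ≠ i} (1 + λ_j I)`. Expanding the product, the two sums on the
right are `Re z` and `-Im z`, so the right-hand side is `Re (e^{-iΘ} z) = Re (V / (1 + λ_i I))`,
which is `V / (1 + λ_i²)`.
-/

open Real

/-- The `m`-th elementary symmetric polynomial of the `n-1` numbers obtained from
`λ_1, …, λ_n` by deleting `λ_i` (so `esymmDel n 0 lam i = 1`, and it vanishes for
`m > n - 1`). -/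
noncomputable def esymmDel (n m : ℕ) (lam : Fin n → ℝ) (i : Fin n) : ℝ :=
  ∑ s ∈ Finset.powersetCard m ((Finset.univ : Finset (Fin n)).erase i), ∏ j ∈ s, lam j

open Finset Complex

lemma one_add_mul_I_eq_sqrt_mul_exp_arctan (x : ℝ) :
    1 + x * I = √(1 + x ^ 2) * exp (Real.arctan x * I) := by
  have hsqrt : (√(1 + x ^ 2) : ℂ) ≠ 0 := by exact_mod_cast (by positivity : √(1 + x ^ 2) ≠ 0)
  rw [exp_mul_I, ← ofReal_cos, ← ofReal_sin, Real.cos_arctan, Real.sin_arctan]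
  push_cast
  field_simp

lemma prod_one_add_mul_I_eq_prod_sqrt_mul_exp {ι : Type*} (s : Finset ι) (f : ι → ℝ) :
    ∏ j ∈ s, (1 + f j * I) =
      (∏ j ∈ s, √(1 + f j ^ 2) : ℝ) * exp ((∑ j ∈ s, Real.arctan (f j) : ℝ) * I) := by
  rw [ofReal_prod, ofReal_sum, sum_mul, Complex.exp_sum, ← prod_mul_distrib]
  exact prod_congr rfl fun j _ => one_add_mul_I_eq_sqrt_mul_exp_arctan (f j)

lemma prod_one_add_mul_I_eq_sum_esymm {ι : Type*} (s : Finset ι) (f : ι → ℝ) {N : ℕ}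
    (hN : #s < N) :
    ∏ j ∈ s, (1 + f j * I) =
      ∑ m ∈ range N, I ^ m * (∑ t ∈ powersetCard m s, ∏ j ∈ t, f j : ℝ) := by
  have hcard : ∀ t ∈ s.powerset, #t ∈ range N := fun t ht =>
    mem_range.2 ((card_le_card (mem_powerset.1 ht)).trans_lt hN)
  rw [prod_one_add, ← sum_fiberwise_of_maps_to hcard]
  refine sum_congr rfl fun m _ => ?_
  simp only [← powersetCard_eq_filter, ofReal_sum, ofReal_prod, mul_sum]
  refine sum_congr rfl fun t ht => ?_
  rw [prod_mul_distrib, prod_const, (mem_powersetCard.1 ht).2, mul_comm]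

lemma sum_range_two_mul_I_pow_mul (N : ℕ) (c : ℕ → ℝ) :
    ∑ m ∈ range (2 * N), I ^ m * (c m : ℂ) =
      (∑ k ∈ range N, (-1) ^ k * c (2 * k) : ℝ) +
        (∑ k ∈ range N, (-1) ^ k * c (2 * k + 1) : ℝ) * I := by
  induction N with
  | zero => simp
  | succ N ih =>
    rw [mul_add_one, sum_range_succ, sum_range_succ, ih, sum_range_succ, sum_range_succ,
      pow_succ, pow_mul, I_sq]
    push_cast
    ring

lemma sum_Icc_neg_one_pow_mul_eq_neg_sum_range (N : ℕ) (c : ℕ → ℝ) :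
    ∑ k ∈ Icc 1 N, (-1) ^ k * c (2 * k - 1) = -∑ k ∈ range N, (-1) ^ k * c (2 * k + 1) := by
  induction N with
  | zero => simp
  | succ N ih =>
    rw [sum_Icc_succ_top (by omega), ih, sum_range_succ, show 2 * (N + 1) - 1 = 2 * N + 1 by omega]
    ring

lemma esymmDel_eq_zero_of_le {n m : ℕ} (lam : Fin n → ℝ) (i : Fin n) (h : n ≤ m) :
    esymmDel n m lam i = 0 := by
  rw [esymmDel, powersetCard_eq_empty.2, sum_empty]
  rw [card_erase_of_mem (mem_univ i), card_univ, Fintype.card_fin]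
  have := i.pos
  omega

lemma prod_erase_one_add_mul_I_eq {n : ℕ} (lam : Fin n → ℝ) (i : Fin n) :
    ∏ j ∈ univ.erase i, (1 + lam j * I) =
      (∑ k ∈ range (n + 1), (-1) ^ k * esymmDel n (2 * k) lam i : ℝ) -
        (∑ k ∈ Icc 1 n, (-1) ^ k * esymmDel n (2 * k - 1) lam i : ℝ) * I := by
  have hcard : #(univ.erase i) < 2 * (n + 1) := by
    rw [card_erase_of_mem (mem_univ i), card_univ, Fintype.card_fin]
    omega
  rw [prod_one_add_mul_I_eq_sum_esymm _ _ hcard]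
  change ∑ m ∈ range (2 * (n + 1)), I ^ m * (esymmDel n m lam i : ℂ) = _
  rw [sum_range_two_mul_I_pow_mul, sum_Icc_neg_one_pow_mul_eq_neg_sum_range n (esymmDel n · lam i),
    sum_range_succ (fun k => (-1) ^ k * esymmDel n (2 * k + 1) lam i) n,
    esymmDel_eq_zero_of_le lam i (by omega)]
  push_cast
  ring

lemma div_one_add_sq_eq_cos_mul_sub_sin_mul {x a b r θ : ℝ}
    (h : (1 + x * I) * (a - b * I) = r * exp (θ * I)) :
    r / (1 + x ^ 2) = Real.cos θ * a - Real.sin θ * b := by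
  rw [exp_mul_I, ← ofReal_cos, ← ofReal_sin] at h
  have hre := congrArg re h
  have him := congrArg im h
  simp only [mul_re, mul_im, add_re, add_im, sub_re, sub_im, ofReal_re, ofReal_im, I_re, I_im,
    one_re, one_im] at hre him
  rw [div_eq_iff (by positivity)]
  linear_combination (x * Real.sin θ - Real.cos θ) * hre - (Real.sin θ + x * Real.cos θ) * him
    - r * Real.sin_sq_add_cos_sq θ

/-- The conformality identity: if `∑ arctan λ_j = Θ`, then for each `i`,
`(1/(1+λ_i²)) ∏_j √(1+λ_j²)
  = cos Θ ∑_{0 ≤ 2k ≤ n-1} (-1)^k σ_{2k}(λ̂_i) - sin Θ ∑_{1 ≤ 2k-1 ≤ n-1} (-1)^k σ_{2k-1}(λ̂_i)`.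
(The first sum is written over `k ∈ range (n+1)` and the second over `k ∈ Icc 1 n`:
the extra terms vanish since `σ_m(λ̂_i) = 0` for `m > n - 1`.) -/
theorem conformality_identity
    (n : ℕ) (lam : Fin n → ℝ) (Θ : ℝ)
    (hsum : ∑ j, Real.arctan (lam j) = Θ) :
    ∀ i : Fin n,
      (1 / (1 + lam i ^ 2)) * ∏ j, Real.sqrt (1 + lam j ^ 2) =
        Real.cos Θ *
            (∑ k ∈ Finset.range (n + 1), (-1 : ℝ) ^ k * esymmDel n (2 * k) lam i) -
          Real.sin Θ *
            (∑ k ∈ Finset.Icc 1 n, (-1 : ℝ) ^ k * esymmDel n (2 * k - 1) lam i) := by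
  intro i
  have hprod := prod_one_add_mul_I_eq_prod_sqrt_mul_exp univ lam
  rw [← mul_prod_erase univ _ (mem_univ i), prod_erase_one_add_mul_I_eq, hsum] at hprod
  rw [one_div_mul_eq_div, div_one_add_sq_eq_cos_mul_sub_sin_mul hprod]
end

section
/- Let n ≥ 2 and let λ_1,…,λ_n be real numbers with ∑_{i=1}^n arctan λ_i = (n−2)π/2. Then ∑_{i=1}^n (1/(1+λ_i²)) · ∏_{j=1}^n √(1+λ_j²) = 2σ_{n−2} − 4σ_{n−4} + 6σ_{n−6} − ⋯ = ∑_{j≥1, n−2j≥0} (−1)^{j−1} · 2j · σ_{n−2j}(λ_1,…,λ_n). -/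
open Real

/-- The `k`-th elementary symmetric polynomial of `λ_1, …, λ_n`. -/
noncomputable def esymm (n k : ℕ) (lam : Fin n → ℝ) : ℝ :=
  ∑ s ∈ Finset.powersetCard k (Finset.univ : Finset (Fin n)), ∏ i ∈ s, lam i

/-!
Put `c_j = 1 + i λ_j = √(1 + λ_j²) e^{i arctan λ_j}`. The phase condition says
`∏ c_j = P i^{n-2}` with `P = ∏ √(1 + λ_j²)`. Differentiating Vieta's formula
`∏ (X + i λ_j) = ∑ i^k σ_k X^{n-k}` at `X = 1` gives `∑_i ∏_{j ≠ i} c_j = ∑_k (n - k) i^k σ_k`,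
and the left side is `∏ c_j · ∑ c_i⁻¹` with `Re c_i⁻¹ = 1 / (1 + λ_i²)`. Multiplying by
`(-i)^{n-2}` and taking real parts, only the terms with `n - k = 2j` even survive.
-/

open Complex Polynomial Finset

theorem Finset.sum_prod_erase_one_add {R ι : Type*} [CommSemiring R] [DecidableEq ι]
    (s : Finset ι) (x : ι → R) :
    ∑ i ∈ s, ∏ j ∈ s.erase i, (1 + x j) =
      ∑ k ∈ range (#s + 1), ((#s - k : ℕ) : R) * (s.val.map x).esymm k := by
  have hvieta : ∏ j ∈ s, (X + C (x j)) =
      ∑ k ∈ range (#s + 1), C ((s.val.map x).esymm k) * X ^ (#s - k) := by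
    simpa only [Multiset.map_map, Function.comp_def, Multiset.card_map, card_val,
      prod_eq_multiset_prod] using Multiset.prod_X_add_C_eq_sum_esymm (s.val.map x)
  have hderiv := congrArg (eval 1) (derivative_prod_finset (s := s) (f := fun j => X + C (x j)))
  rw [hvieta] at hderiv
  simp only [derivative_add, derivative_X, derivative_C, add_zero, mul_one, derivative_sum,
    derivative_C_mul_X_pow, eval_finsetSum, eval_prod, eval_add, eval_X, eval_C, eval_mul,
    eval_pow, one_pow, mul_one] at hderiv
  rw [← hderiv]
  exact sum_congr rfl fun k _ => mul_comm _ _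

theorem Finset.sum_prod_erase_eq_prod_mul_sum_inv {K ι : Type*} [Field K] [DecidableEq ι]
    (s : Finset ι) {f : ι → K} (hf : ∀ i ∈ s, f i ≠ 0) :
    ∑ i ∈ s, ∏ j ∈ s.erase i, f j = (∏ j ∈ s, f j) * ∑ i ∈ s, (f i)⁻¹ := by
  rw [mul_sum]
  refine sum_congr rfl fun i hi => ?_
  rw [← mul_prod_erase s f hi, mul_comm (f i), mul_assoc, mul_inv_cancel₀ (hf i hi), mul_one]

theorem Finset.sum_range_succ_eq_sum_Icc_two_mul {M : Type*} [AddCommMonoid M] (f : ℕ → M)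
    (n : ℕ) (h0 : f 0 = 0) (hodd : ∀ l, Odd l → f l = 0) :
    ∑ l ∈ range (n + 1), f l = ∑ j ∈ Icc 1 (n / 2), f (2 * j) := by
  rw [← sum_image (g := (2 * ·)) fun a _ b _ h => by simpa using h]
  symm
  refine sum_subset (fun l => by simp only [mem_image, mem_Icc, mem_range]; omega)
    fun l hl hl' => ?_
  rcases Nat.even_or_odd' l with ⟨j, rfl | rfl⟩
  · obtain rfl | hj := Nat.eq_zero_or_pos j
    · exact h0
    · simp only [mem_image, mem_Icc, mem_range, not_exists, not_and] at hl hl'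
      exact absurd rfl (hl' j ⟨hj, by omega⟩)
  · exact hodd _ (odd_two_mul_add_one j)

theorem one_add_mul_I_eq_sqrt_mul_exp (x : ℝ) :
    1 + x * I = √(1 + x ^ 2) * Complex.exp (Real.arctan x * I) := by
  have h : (√(1 + x ^ 2) : ℂ) ≠ 0 := ofReal_ne_zero.mpr (by positivity)
  rw [exp_mul_I, ← ofReal_cos, ← ofReal_sin, Real.cos_arctan, Real.sin_arctan]
  push_cast
  field_simp

theorem prod_one_add_mul_I {ι : Type*} (s : Finset ι) (x : ι → ℝ) :
    ∏ i ∈ s, (1 + x i * I) =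
      (∏ i ∈ s, √(1 + x i ^ 2) : ℝ) * Complex.exp ((∑ i ∈ s, Real.arctan (x i) : ℝ) * I) := by
  simp_rw [one_add_mul_I_eq_sqrt_mul_exp, prod_mul_distrib, ← Complex.exp_sum]
  push_cast
  rw [sum_mul]

theorem exp_nat_mul_pi_div_two_mul_I (m : ℕ) : Complex.exp ((m * π / 2 : ℝ) * I) = I ^ m := by
  rw [show ((m * π / 2 : ℝ) : ℂ) * I = m * (π / 2 * I) by push_cast; ring, Complex.exp_nat_mul,
    exp_pi_div_two_mul_I]

theorem one_add_mul_I_ne_zero (x : ℝ) : 1 + x * I ≠ 0 :=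
  fun h => by simpa using congrArg re h

theorem inv_re_one_add_mul_I (x : ℝ) : (1 + x * I)⁻¹.re = 1 / (1 + x ^ 2) := by
  simp [inv_re, normSq_apply, sq]

theorem esymm_map_ofReal_mul_I {n : ℕ} (lam : Fin n → ℝ) (k : ℕ) :
    (univ.val.map fun i => (lam i : ℂ) * I).esymm k = I ^ k * esymm n k lam := by
  rw [esymm_map_val, esymm]
  push_cast
  rw [mul_sum]
  refine sum_congr rfl fun t ht => ?_
  rw [prod_mul_distrib, prod_const, (mem_powersetCard.mp ht).2, mul_comm]

theorem neg_I_pow_mul_I_pow (m : ℕ) : (-I) ^ m * I ^ m = 1 := by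
  rw [← mul_pow, neg_mul, I_mul_I, neg_neg, one_pow]

theorem neg_I_pow_mul_I_pow_sub {n l : ℕ} (hn : 2 ≤ n) (hl : l ≤ n) :
    (-I) ^ (n - 2) * I ^ (n - l) = -(-I) ^ l := by
  have huv : I ^ (n - l) * I ^ l = -I ^ (n - 2) := by
    rw [← pow_add, Nat.sub_add_cancel hl]
    nth_rw 1 [← Nat.sub_add_cancel hn]
    rw [pow_add, I_sq, mul_neg_one]
  have hvw : I ^ l * (-I) ^ l = 1 := by
    rw [mul_comm, neg_I_pow_mul_I_pow]
  linear_combination (-(-I) ^ (n - 2) * I ^ (n - l)) * hvw + ((-I) ^ (n - 2) * (-I) ^ l) * huv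
    - (-I) ^ l * neg_I_pow_mul_I_pow (n - 2)

theorem re_neg_I_pow_two_mul (j : ℕ) : ((-I) ^ (2 * j)).re = (-1) ^ j := by
  rw [pow_mul, neg_sq, I_sq, show (-1 : ℂ) = ((-1 : ℝ) : ℂ) by push_cast; rfl, ← ofReal_pow,
    ofReal_re]

theorem re_neg_I_pow_of_odd {l : ℕ} (hl : Odd l) : ((-I) ^ l).re = 0 := by
  obtain ⟨m, rfl⟩ := hl
  rw [pow_succ, pow_mul, neg_sq, I_sq, show (-1 : ℂ) = ((-1 : ℝ) : ℂ) by push_cast; rfl,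
    ← ofReal_pow, re_ofReal_mul]
  simp

theorem re_neg_I_pow_mul_sum {n : ℕ} (hn : 2 ≤ n) (g : ℕ → ℝ) :
    ((-I) ^ (n - 2) * ∑ k ∈ range (n + 1), ((n - k : ℕ) : ℂ) * (I ^ k * g k)).re =
      ∑ j ∈ Icc 1 (n / 2), (-1) ^ (j - 1) * (2 * j) * g (n - 2 * j) := by
  calc _ = ∑ l ∈ range (n + 1), -((-I) ^ l).re * (l * g (n - l)) := by
          rw [mul_sum, re_sum, ← sum_range_reflect]
          refine sum_congr rfl fun l hl => ?_
          have hl : l ≤ n := Nat.lt_succ_iff.mp (mem_range.mp hl)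
          rw [Nat.add_sub_cancel, Nat.sub_sub_self hl,
            show (-I) ^ (n - 2) * ((l : ℂ) * (I ^ (n - l) * g (n - l)))
              = (-I) ^ (n - 2) * I ^ (n - l) * ((l * g (n - l) : ℝ) : ℂ) by push_cast; ring,
            neg_I_pow_mul_I_pow_sub hn hl, re_mul_ofReal, neg_re]
    _ = ∑ j ∈ Icc 1 (n / 2), -((-I) ^ (2 * j)).re * ((2 * j : ℕ) * g (n - 2 * j)) :=
          sum_range_succ_eq_sum_Icc_two_mul _ _ (by simp)
            fun l hl => by rw [re_neg_I_pow_of_odd hl, neg_zero, zero_mul]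
    _ = _ := sum_congr rfl fun j hj => by
          obtain ⟨i, rfl⟩ := Nat.exists_eq_add_of_le' (mem_Icc.mp hj).1
          rw [re_neg_I_pow_two_mul, Nat.add_sub_cancel, pow_succ]
          push_cast
          ring

/-- Trace of the conformality identity at the critical phase: if
`∑ arctan λ_i = (n-2)π/2`, `n ≥ 2`, then
`∑_i (1/(1+λ_i²)) ∏_j √(1+λ_j²) = 2σ_{n-2} - 4σ_{n-4} + 6σ_{n-6} - ⋯
  = ∑_{j ≥ 1, n-2j ≥ 0} (-1)^{j-1} 2j σ_{n-2j}`. -/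
theorem conformality_trace_critical
    (n : ℕ) (hn : 2 ≤ n) (lam : Fin n → ℝ)
    (hsum : ∑ i, Real.arctan (lam i) = ((n : ℝ) - 2) * Real.pi / 2) :
    ∑ i, (1 / (1 + lam i ^ 2)) * ∏ j, Real.sqrt (1 + lam j ^ 2) =
      ∑ j ∈ Finset.Icc 1 (n / 2),
        (-1 : ℝ) ^ (j - 1) * (2 * (j : ℝ)) * esymm n (n - 2 * j) lam := by
  set P : ℝ := ∏ j, √(1 + lam j ^ 2)
  have hprod : ∏ i, (1 + lam i * I) = P * I ^ (n - 2) := by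
    rw [prod_one_add_mul_I, hsum, show (n : ℝ) - 2 = (n - 2 : ℕ) by push_cast [hn]; ring,
      exp_nat_mul_pi_div_two_mul_I]
  have hvieta : ∑ i, ∏ j ∈ univ.erase i, (1 + lam j * I) =
      ∑ k ∈ range (n + 1), ((n - k : ℕ) : ℂ) * (I ^ k * esymm n k lam) := by
    simpa only [card_univ, Fintype.card_fin, esymm_map_ofReal_mul_I] using sum_prod_erase_one_add univ fun j => (lam j : ℂ) * I
  have hkey : (P : ℂ) * ∑ i, (1 + lam i * I)⁻¹ =
      (-I) ^ (n - 2) * ∑ k ∈ range (n + 1), ((n - k : ℕ) : ℂ) * (I ^ k * esymm n k lam) := by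
    rw [← hvieta, sum_prod_erase_eq_prod_mul_sum_inv _ fun i _ => one_add_mul_I_ne_zero _, hprod]
    linear_combination (-(P : ℂ) * ∑ i, (1 + lam i * I)⁻¹) * neg_I_pow_mul_I_pow (n - 2)
  have hre := congrArg re hkey
  rw [re_ofReal_mul, re_sum, re_neg_I_pow_mul_sum hn] at hre
  simp only [inv_re_one_add_mul_I] at hre
  rw [← hre, ← sum_mul, mul_comm]
end

section
/- Let n ≥ 3 and let λ_1 ≥ λ_2 ≥ ⋯ ≥ λ_n be real numbers satisfying ∑_{j=1}^n arctan λ_j ≥ (n−2)π/2. Then for every k with 1 ≤ k ≤ n−1 and every index i, 0 ≤ σ_{k−1}(λ̂_i) ≤ (n−k+1) σ_{k−1}(λ_1,…,λ_n), where σ_{k−1}(λ̂_i) denotes the (k−1)-th elementary symmetric polynomial of the n−1 numbers obtained from (λ_1,…,λ_n) by deleting λ_i (note σ_{k−1}(λ̂_i) = ∂σ_k/∂λ_i). -/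
open Real

/-!
Write `σ_m(s)` for the `m`-th elementary symmetric polynomial of the `λ_j` with `j ∈ s`, and call
`s` supercritical when `∑_{j ∈ s} arctan λ_j ≥ (|s| - 2)π/2`. Since `arctan < π/2`, every subset of
a supercritical set is supercritical, and any two of its entries have nonnegative sum.

By induction on `s`, `σ_m(s) ≥ 0` for `m < |s|`. For `m ≤ |s| - 2` this follows from the identity
`∑_{i ∈ s} σ_m(s ∖ i) = (|s| - m) σ_m(s)`. For `m = |s| - 1`, at most one entry `λ_p` is negative,
and then `σ_m(s) = P (1 - |λ_p| S)` with `P = ∏_{j ≠ p} λ_j > 0` and `S = ∑_{j ≠ p} λ_j⁻¹`; here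
`|λ_p| S ≤ 1` because `arctan S ≤ ∑_{j ≠ p} arctan λ_j⁻¹ = ∑_{j ≠ p} (π/2 - arctan λ_j)`, by
subadditivity of `arctan` on `[0, ∞)`, which the phase condition bounds by `π/2 - arctan |λ_p|`.

The theorem is nonnegativity for `s = {1, …, n} ∖ i`, and the upper bound is the same identity for
`s = {1, …, n}`, all of whose summands are nonnegative.
-/

open Finset

section ElementarySymmetric

variable {ι R : Type*}

noncomputable def esymmOn [CommSemiring R] (s : Finset ι) (m : ℕ) (f : ι → R) : R :=
  ∑ t ∈ s.powersetCard m, ∏ j ∈ t, f j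

section CommSemiring

variable [CommSemiring R]

@[simp]
lemma esymmOn_zero (s : Finset ι) (f : ι → R) : esymmOn s 0 f = 1 := by
  simp [esymmOn]

lemma esymmOn_card (s : Finset ι) (f : ι → R) : esymmOn s s.card f = ∏ j ∈ s, f j := by
  simp [esymmOn]

lemma esymmOn_insert_succ [DecidableEq ι] {s : Finset ι} {p : ι} (hp : p ∉ s) (f : ι → R)
    (m : ℕ) :
    esymmOn (insert p s) (m + 1) f = esymmOn s (m + 1) f + f p * esymmOn s m f := by
  have hnot : ∀ t ∈ s.powersetCard m, p ∉ t := fun t ht hpt =>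
    hp ((mem_powersetCard.mp ht).1 hpt)
  rw [esymmOn, powersetCard_succ_insert hp, sum_union, sum_image, esymmOn, esymmOn, mul_sum]
  · exact congrArg _ (sum_congr rfl fun t ht => prod_insert (hnot t ht))
  · intro a ha b hb hab
    rw [← erase_insert (hnot a ha), ← erase_insert (hnot b hb), hab]
  · refine disjoint_left.mpr fun t ht ht' => ?_
    obtain ⟨u, -, rfl⟩ := mem_image.mp ht'
    exact hp ((mem_powersetCard.mp ht).1 (mem_insert_self p u))

lemma sum_esymmOn_erase [DecidableEq ι] (s : Finset ι) (f : ι → R) (m : ℕ) :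
    ∑ i ∈ s, esymmOn (s.erase i) m f = (s.card - m) • esymmOn s m f := by
  have herase : ∀ i, (s.erase i).powersetCard m = (s.powersetCard m).filter (i ∉ ·) := by
    intro i
    ext t
    simp only [mem_powersetCard, mem_filter, subset_erase]
    tauto
  simp only [esymmOn, herase, sum_filter]
  rw [sum_comm, smul_sum]
  refine sum_congr rfl fun t ht => ?_
  obtain ⟨hts, htm⟩ := mem_powersetCard.mp ht
  rw [← sum_filter, sum_const, filter_notMem_eq_sdiff, card_sdiff_of_subset hts, htm]

end CommSemiring

lemma esymmOn_nonneg [CommSemiring R] [PartialOrder R] [IsOrderedRing R] (s : Finset ι)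
    (m : ℕ) {f : ι → R} (hf : ∀ j ∈ s, 0 ≤ f j) : 0 ≤ esymmOn s m f :=
  sum_nonneg fun _ ht => prod_nonneg fun j hj => hf j ((mem_powersetCard.mp ht).1 hj)

lemma esymmOn_eq_prod_mul_sum_inv [DecidableEq ι] [Field R] {s : Finset ι} {m : ℕ}
    (hs : s.card = m + 1) {f : ι → R} (hf : ∀ j ∈ s, f j ≠ 0) :
    esymmOn s m f = (∏ j ∈ s, f j) * ∑ j ∈ s, (f j)⁻¹ := by
  have hsum := sum_esymmOn_erase s f m
  rw [hs, Nat.add_sub_cancel_left, one_smul] at hsum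
  rw [← hsum, mul_sum]
  refine sum_congr rfl fun i hi => ?_
  have hcard : (s.erase i).card = m := by rw [card_erase_of_mem hi, hs, Nat.add_sub_cancel]
  rw [← hcard, esymmOn_card, ← prod_erase_mul s f hi, mul_assoc, mul_inv_cancel₀ (hf i hi),
    mul_one]

end ElementarySymmetric

namespace Real

lemma arctan_add_le {a b : ℝ} (ha : 0 ≤ a) (hb : 0 ≤ b) :
    arctan (a + b) ≤ arctan a + arctan b := by
  rcases lt_or_ge (a * b) 1 with hab | hab
  · rw [arctan_add hab]
    apply arctan_strictMono.monotone
    rw [le_div_iff₀ (by linarith)]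
    nlinarith [mul_nonneg (mul_nonneg ha hb) (add_nonneg ha hb)]
  · have hb' : 0 < b := by nlinarith
    have hba : b⁻¹ ≤ a := by rw [inv_le_iff_one_le_mul₀ hb']; linarith
    have := arctan_strictMono.monotone hba
    rw [arctan_inv_of_pos hb'] at this
    linarith [arctan_lt_pi_div_two (a + b)]

lemma arctan_sum_le_sum_arctan {ι : Type*} (s : Finset ι) {f : ι → ℝ} (hf : ∀ i ∈ s, 0 ≤ f i) :
    arctan (∑ i ∈ s, f i) ≤ ∑ i ∈ s, arctan (f i) := by
  induction s using Finset.cons_induction with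
  | empty => simp
  | cons a s ha ih =>
    rw [sum_cons, sum_cons]
    have hs : ∀ i ∈ s, 0 ≤ f i := fun i hi => hf i (mem_cons_of_mem hi)
    linarith [arctan_add_le (hf a (mem_cons_self a s)) (sum_nonneg hs), ih hs]

lemma mul_le_one_of_arctan_add_le {a b : ℝ} (hb : 0 < b) (h : arctan a + arctan b ≤ π / 2) :
    a * b ≤ 1 := by
  have : a ≤ b⁻¹ := arctan_strictMono.le_iff_le.mp (by rw [arctan_inv_of_pos hb]; linarith)
  calc a * b ≤ b⁻¹ * b := mul_le_mul_of_nonneg_right this hb.le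
    _ = 1 := inv_mul_cancel₀ hb.ne'

end Real

section SupercriticalPhase

variable {ι : Type*} [DecidableEq ι] {s t : Finset ι} {f : ι → ℝ}

/-- Non-strict form of the supercritical phase condition of the deformed Hermitian–Yang–Mills
equation. -/
def SupercriticalPhase (s : Finset ι) (f : ι → ℝ) : Prop :=
  ((s.card : ℝ) - 2) * π / 2 ≤ ∑ j ∈ s, arctan (f j)

lemma SupercriticalPhase.subset (h : SupercriticalPhase s f) (hts : t ⊆ s) :
    SupercriticalPhase t f := by
  have hrest : ∑ j ∈ s \ t, arctan (f j) ≤ ((s \ t).card : ℝ) * (π / 2) := by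
    simpa using sum_le_sum fun j (_ : j ∈ s \ t) => (arctan_lt_pi_div_two (f j)).le
  have hcard : ((s \ t).card : ℝ) + t.card = s.card := by
    exact_mod_cast card_sdiff_add_card_eq_card hts
  unfold SupercriticalPhase at h ⊢
  rw [← sum_sdiff hts, ← hcard] at h
  linarith

lemma SupercriticalPhase.add_nonneg (h : SupercriticalPhase s f) {p j : ι} (hp : p ∈ s)
    (hj : j ∈ s) (hpj : p ≠ j) : 0 ≤ f p + f j := by
  have hpair := h.subset (insert_subset hp (singleton_subset_iff.mpr hj))
  simp only [SupercriticalPhase, card_pair hpj, sum_pair hpj] at hpair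
  have : arctan (-f p) ≤ arctan (f j) := by rw [arctan_neg]; push_cast at hpair; linarith
  linarith [arctan_strictMono.le_iff_le.mp this]

lemma SupercriticalPhase.arctan_sum_inv_le (h : SupercriticalPhase s f) {p : ι} (hp : p ∈ s)
    (hpos : ∀ j ∈ s.erase p, 0 < f j) :
    arctan (∑ j ∈ s.erase p, (f j)⁻¹) ≤ π / 2 + arctan (f p) := by
  have hsub := arctan_sum_le_sum_arctan (s.erase p) fun j hj => (inv_pos.mpr (hpos j hj)).le
  rw [sum_congr rfl fun j hj => arctan_inv_of_pos (hpos j hj), sum_sub_distrib, sum_const,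
    nsmul_eq_mul] at hsub
  have hcard : ((s.erase p).card : ℝ) + 1 = s.card := by exact_mod_cast card_erase_add_one hp
  unfold SupercriticalPhase at h
  rw [← sum_erase_add s _ hp, ← hcard] at h
  linarith

lemma SupercriticalPhase.esymmOn_card_sub_one_nonneg (h : SupercriticalPhase s f) {m : ℕ}
    (hs : s.card = m + 2) : 0 ≤ esymmOn s (m + 1) f := by
  by_cases hall : ∀ j ∈ s, 0 ≤ f j
  · exact esymmOn_nonneg s _ hall
  push Not at hall
  obtain ⟨p, hp, hfp⟩ := hall
  have hpos : ∀ j ∈ s.erase p, 0 < f j := fun j hj => by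
    linarith [h.add_nonneg hp (mem_of_mem_erase hj) (ne_of_mem_erase hj).symm]
  have hcard : (s.erase p).card = m + 1 := by rw [card_erase_of_mem hp, hs]; rfl
  set S := ∑ j ∈ s.erase p, (f j)⁻¹
  have hS : 0 < S := sum_pos (fun j hj => inv_pos.mpr (hpos j hj)) (card_pos.mp (by omega))
  have hfpS : -f p * S ≤ 1 := mul_le_one_of_arctan_add_le hS <| by
    rw [arctan_neg]; linarith [h.arctan_sum_inv_le hp hpos]
  calc 0 ≤ (∏ j ∈ s.erase p, f j) * (1 - -f p * S) :=
        mul_nonneg (prod_nonneg fun j hj => (hpos j hj).le) (by linarith)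
    _ = esymmOn s (m + 1) f := by
      have hsplit := esymmOn_insert_succ (notMem_erase p s) f m
      rw [insert_erase hp, ← hcard, esymmOn_card, hcard,
        esymmOn_eq_prod_mul_sum_inv hcard fun j hj => (hpos j hj).ne'] at hsplit
      rw [hsplit]
      ring

theorem SupercriticalPhase.esymmOn_nonneg (h : SupercriticalPhase s f) {m : ℕ}
    (hm : m < s.card) : 0 ≤ esymmOn s m f := by
  induction s using Finset.strongInduction generalizing m with
  | H s ih =>
  rcases m with _ | m
  · simp
  obtain hs | hs := eq_or_lt_of_le (Nat.succ_le_of_lt hm)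
  · exact h.esymmOn_card_sub_one_nonneg hs.symm
  have herase : ∀ i ∈ s, 0 ≤ esymmOn (s.erase i) (m + 1) f := fun i hi =>
    ih _ (erase_ssubset hi) (h.subset (erase_subset i s)) (by rw [card_erase_of_mem hi]; omega)
  have hsum := sum_nonneg herase
  rw [sum_esymmOn_erase, nsmul_eq_mul] at hsum
  exact nonneg_of_mul_nonneg_right hsum (by exact_mod_cast Nat.sub_pos_of_lt hm)

end SupercriticalPhase

theorem sigma_partial_bounds_general
    (n : ℕ) (lam : Fin n → ℝ)
    (hsum : ((n : ℝ) - 2) * Real.pi / 2 ≤ ∑ j, Real.arctan (lam j)) :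
    ∀ k : ℕ, 1 ≤ k → k ≤ n - 1 → ∀ i : Fin n,
      0 ≤ esymmDel n (k - 1) lam i ∧
        esymmDel n (k - 1) lam i ≤ ((n - k + 1 : ℕ) : ℝ) * esymm n (k - 1) lam := by
  intro k hk1 hkn i
  have hphase : SupercriticalPhase (univ : Finset (Fin n)) lam := by
    simpa [SupercriticalPhase] using hsum
  have hdel : ∀ j, 0 ≤ esymmDel n (k - 1) lam j := fun j =>
    (hphase.subset (erase_subset j univ)).esymmOn_nonneg
      (by rw [card_erase_of_mem (mem_univ j), card_univ, Fintype.card_fin]; omega)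
  refine ⟨hdel i, ?_⟩
  have hsum_del : ∑ j, esymmDel n (k - 1) lam j = ((n - k + 1 : ℕ) : ℝ) * esymm n (k - 1) lam := by
    change ∑ j, esymmOn (univ.erase j) (k - 1) lam = _ * esymmOn univ (k - 1) lam
    rw [sum_esymmOn_erase, card_univ, Fintype.card_fin, nsmul_eq_mul]
    congr 2
    omega
  exact hsum_del ▸ single_le_sum (fun j _ => hdel j) (mem_univ i)

/-- For ordered reals `λ_1 ≥ ⋯ ≥ λ_n` with `∑ arctan λ_j ≥ (n-2)π/2`, `n ≥ 3`, for
every `1 ≤ k ≤ n-1` and every `i`: `0 ≤ σ_{k-1}(λ̂_i) ≤ (n-k+1) σ_{k-1}(λ)`. -/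
theorem sigma_partial_bounds
    (n : ℕ) (hn : 3 ≤ n) (lam : Fin n → ℝ)
    (hsort : ∀ i j : Fin n, i ≤ j → lam j ≤ lam i)
    (hsum : ((n : ℝ) - 2) * Real.pi / 2 ≤ ∑ j, Real.arctan (lam j)) :
    ∀ k : ℕ, 1 ≤ k → k ≤ n - 1 → ∀ i : Fin n,
      0 ≤ esymmDel n (k - 1) lam i ∧
        esymmDel n (k - 1) lam i ≤ ((n - k + 1 : ℕ) : ℝ) * esymm n (k - 1) lam :=
  sigma_partial_bounds_general n lam hsum
end

section
/- For all integers n ≥ 2 and m with 1 ≤ m ≤ n−1, one has 1 − 4/(√(4n+1) + 1) ≤ 2 − m/n − √( (1 − m/n)² + 4/n ) ≤ (n−2)/n. -/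
/-!
Put `x = 1 - m/n ∈ [1/n, 1 - 1/n]`; the middle expression is `1 + x - √(x² + 4/n)`.
Squaring, `√(x² + 4/n) ≥ x + 2/n` amounts to `x ≤ 1 - 1/n`, and `√(x² + 4/n) ≤ x + t` with
`t = (√(4n+1) - 1)/n` amounts to `4/n ≤ 2xt + t²`, which holds for `x ≥ 1/n` because
`2t/n + t² = 4/n`. Rationalising, `t = 4/(√(4n+1) + 1)`.
-/

open Real

lemma sqrt_sq_add_le_add {x t d : ℝ} (hx : 0 ≤ x) (ht : 0 ≤ t) (hd : d ≤ 2 * x * t + t ^ 2) :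
    √(x ^ 2 + d) ≤ x + t :=
  Real.sqrt_le_iff.mpr ⟨by positivity, by linarith⟩

lemma add_le_sqrt_sq_add {x t d : ℝ} (hd : 2 * x * t + t ^ 2 ≤ d) : x + t ≤ √(x ^ 2 + d) :=
  (le_abs_self _).trans (Real.abs_le_sqrt (by linarith))

lemma four_div_sqrt_four_mul_add_one_add_one {a : ℝ} (ha : 0 < a) :
    4 / (√(4 * a + 1) + 1) = (√(4 * a + 1) - 1) / a := by
  have hs : √(4 * a + 1) ^ 2 = 4 * a + 1 := Real.sq_sqrt (by linarith)
  rw [div_eq_div_iff (by positivity) ha.ne']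
  linear_combination -hs

lemma one_sub_four_div_le {a b : ℝ} (ha : 0 < a) (hb : b ≤ a - 1) :
    1 - 4 / (√(4 * a + 1) + 1) ≤ 2 - b / a - √((1 - b / a) ^ 2 + 4 / a) := by
  set s := √(4 * a + 1)
  have hs : s ^ 2 = 4 * a + 1 := Real.sq_sqrt (by linarith)
  have hs1 : 1 ≤ s := Real.one_le_sqrt.mpr (by linarith)
  have hx : 1 / a ≤ 1 - b / a := by
    rw [le_sub_iff_add_le, ← add_div, div_le_one ha]; linarith
  have hbound : √((1 - b / a) ^ 2 + 4 / a) ≤ (1 - b / a) + (s - 1) / a := by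
    refine sqrt_sq_add_le_add ((one_div_pos.mpr ha).le.trans hx) (by positivity) ?_
    have hkey : 2 * (1 / a) * ((s - 1) / a) + ((s - 1) / a) ^ 2 = 4 / a := by
      field_simp
      linear_combination hs
    rw [← hkey]
    gcongr
  rw [four_div_sqrt_four_mul_add_one_add_one ha]
  linarith

lemma le_sub_two_div {a b : ℝ} (ha : 0 < a) (hb : 1 ≤ b) :
    2 - b / a - √((1 - b / a) ^ 2 + 4 / a) ≤ (a - 2) / a := by
  have hbound : (1 - b / a) + 2 / a ≤ √((1 - b / a) ^ 2 + 4 / a) := by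
    refine add_le_sqrt_sq_add ?_
    have hkey : 2 * (1 - b / a) * (2 / a) + (2 / a) ^ 2 = 4 / a - 4 * (b - 1) / a ^ 2 := by
      field_simp
      ring
    rw [hkey]
    have : 0 ≤ 4 * (b - 1) / a ^ 2 := by
      exact div_nonneg (by linarith) (by positivity)
    linarith
  have hrhs : (a - 2) / a = 1 - 2 / a := by field_simp
  rw [hrhs]
  linarith

theorem jacobi_constant_inequality_general
    (n m : ℕ) (hm1 : 1 ≤ m) (hmn : m ≤ n - 1) :
    1 - 4 / (Real.sqrt (4 * (n : ℝ) + 1) + 1) ≤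
        2 - (m : ℝ) / n - Real.sqrt ((1 - (m : ℝ) / n) ^ 2 + 4 / n) ∧
      2 - (m : ℝ) / n - Real.sqrt ((1 - (m : ℝ) / n) ^ 2 + 4 / n) ≤ ((n : ℝ) - 2) / n := by
  have hmn' : m + 1 ≤ n := by omega
  have hn : (0 : ℝ) < n := by exact_mod_cast (show 0 < n by omega)
  refine ⟨one_sub_four_div_le hn ?_, le_sub_two_div hn (by exact_mod_cast hm1)⟩
  have : (m : ℝ) + 1 ≤ n := by exact_mod_cast hmn'
  linarith

/-- Elementary inequality comparing the Jacobi constants: for integers `n ≥ 2` and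
`1 ≤ m ≤ n-1`, `1 - 4/(√(4n+1)+1) ≤ 2 - m/n - √((1-m/n)² + 4/n) ≤ (n-2)/n`. -/
theorem jacobi_constant_inequality
    (n m : ℕ) (hn : 2 ≤ n) (hm1 : 1 ≤ m) (hmn : m ≤ n - 1) :
    1 - 4 / (Real.sqrt (4 * (n : ℝ) + 1) + 1) ≤
        2 - (m : ℝ) / n - Real.sqrt ((1 - (m : ℝ) / n) ^ 2 + 4 / n) ∧
      2 - (m : ℝ) / n - Real.sqrt ((1 - (m : ℝ) / n) ^ 2 + 4 / n) ≤ ((n : ℝ) - 2) / n :=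
  jacobi_constant_inequality_general n m hm1 hmn
end
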